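/- arXiv:1702.04658 — 2 statements merged into one kernel-verified Lean document; each statement's English description precedes it below -/
import Mathlib

section
/- Let V be a finite-dimensional real vector space, κ a linear involution on V, and suppose G₁, …, Gₙ are polynomial maps V → V that generate a module M of polynomial maps over a ring R of κ-invariant polynomial functions, where M is closed under the operator T(G) = (1/2)(G - κGκ). Then {T(G₁), …, T(Gₙ)} generates the submodule of M consisting of κ-reversible maps (those with G ∘ κ = -κ ∘ G) over R. -/
open MvPolynomial

def IsPolyFun {n : ℕ} (f : (Fin n → ℝ) → ℝ) : Prop :=
  ∃ p : MvPolynomial (Fin n) ℝ, ∀ v, f v = eval v p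

def IsPolyMap {n : ℕ} (G : (Fin n → ℝ) → (Fin n → ℝ)) : Prop :=
  ∀ i, IsPolyFun (fun v => G v i)

/-- If G₁,…,Gₘ generate a T-closed module M over a ring R of κ-invariant polynomial
functions, then T(G₁),…,T(Gₘ) generate the κ-reversible elements of M over R. -/
theorem stmt6 {n m : ℕ} (κ : (Fin n → ℝ) →ₗ[ℝ] (Fin n → ℝ)) (hκ : ∀ v, κ (κ v) = v)
    (T : ((Fin n → ℝ) → (Fin n → ℝ)) → ((Fin n → ℝ) → (Fin n → ℝ)))
    (hT : ∀ G v, T G v = (1/2 : ℝ) • (G v - κ (G (κ v))))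
    (R : Subring ((Fin n → ℝ) → ℝ))
    (hR : ∀ f ∈ R, IsPolyFun f ∧ ∀ v, f (κ v) = f v)
    (M : Set ((Fin n → ℝ) → (Fin n → ℝ)))
    (hMpoly : ∀ G ∈ M, IsPolyMap G)
    (hMT : ∀ G ∈ M, T G ∈ M)
    (G : Fin m → ((Fin n → ℝ) → (Fin n → ℝ)))
    (hGM : ∀ i, G i ∈ M)
    (hgen : ∀ H ∈ M, ∃ c : Fin m → ((Fin n → ℝ) → ℝ),
      (∀ i, c i ∈ R) ∧ ∀ v, H v = ∑ i, c i v • G i v) :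
    ∀ H ∈ M, (∀ v, H (κ v) = -κ (H v)) →
      ∃ c : Fin m → ((Fin n → ℝ) → ℝ),
        (∀ i, c i ∈ R) ∧ ∀ v, H v = ∑ i, c i v • T (G i) v := by
  intro H hHM hrev
  obtain ⟨c, hcR, hc⟩ := hgen H hHM
  refine ⟨c, hcR, fun v => ?_⟩
  have hTH : H v = T H v := by
    rw [hT, hrev v, map_neg, hκ, sub_neg_eq_add]
    rw [smul_add, ← add_smul]
    norm_num
  rw [hTH, hT]
  have h1 : H (κ v) = ∑ i, c i (κ v) • G i (κ v) := hc (κ v)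
  rw [hc v, h1]
  rw [map_sum]
  have h2 : ∀ i, c i (κ v) = c i v := fun i => (hR _ (hcR i)).2 v
  simp_rw [map_smul, h2, hT, ← Finset.sum_sub_distrib, ← smul_sub, Finset.smul_sum]
  congr 1
  ext i
  rw [smul_comm]
end

section
/- Let L be the (2n+2)×(2n+2) matrix as above (one nilpotent 2×2 block and n rotation blocks with distinct nonzero frequencies ωᵢ, ωᵢ² ≠ ωⱼ² for i ≠ j). Then every linear involution φ on ℝ^{2n+2} anti-commuting with L satisfies dim Fix(φ) = n + 1, where Fix(φ) = {v : φv = v}. -/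
/-- The linearization L: one 2×2 nilpotent block and n rotation blocks
with frequencies ω₁,…,ωₙ. -/
def Lmat (n : ℕ) (ω : Fin n → ℝ) : Matrix (Fin (2*n+2)) (Fin (2*n+2)) ℝ :=
  Matrix.of fun i j =>
    if i.val = 0 ∧ j.val = 1 then 1
    else if 2 ≤ i.val ∧ i.val % 2 = 0 ∧ j.val = i.val + 1 then
      (if h : i.val / 2 - 1 < n then ω ⟨i.val / 2 - 1, h⟩ else 0)
    else if 2 ≤ i.val ∧ i.val % 2 = 1 ∧ j.val + 1 = i.val then
      (if h : i.val / 2 - 1 < n then -ω ⟨i.val / 2 - 1, h⟩ else 0)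
    else 0

lemma Lmat_row_zero (n : ℕ) (ω : Fin n → ℝ) (i l : Fin (2*n+2)) (hi : i.val = 0) :
    Lmat n ω i l = if l.val = 1 then 1 else 0 := by
  simp only [Lmat, Matrix.of_apply]
  split_ifs <;> first | rfl | omega

lemma Lmat_col_one (n : ℕ) (ω : Fin n → ℝ) (j l : Fin (2*n+2)) (hj : j.val = 1) :
    Lmat n ω l j = if l.val = 0 then 1 else 0 := by
  simp only [Lmat, Matrix.of_apply]
  split_ifs <;> first | rfl | omega

lemma Lmat_row (n : ℕ) (ω : Fin n → ℝ) (m : ℕ) (hm : m < n) (i l : Fin (2*n+2))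
    (hi : i.val = 2*m+2) :
    Lmat n ω i l = if l.val = 2*m+3 then ω ⟨m, hm⟩ else 0 := by
  simp only [Lmat, Matrix.of_apply]
  split_ifs <;> first | rfl | omega | exact congrArg ω (Fin.mk_eq_mk.mpr (by omega))

lemma Lmat_col (n : ℕ) (ω : Fin n → ℝ) (m : ℕ) (hm : m < n) (j l : Fin (2*n+2))
    (hj : j.val = 2*m+3) :
    Lmat n ω l j = if l.val = 2*m+2 then ω ⟨m, hm⟩ else 0 := by
  simp only [Lmat, Matrix.of_apply]
  split_ifs <;> first | rfl | omega | exact congrArg ω (Fin.mk_eq_mk.mpr (by omega))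

lemma sum_pairs (m : ℕ) (f : ℕ → ℝ) :
    ∑ i ∈ Finset.range (2*m), f i = ∑ k ∈ Finset.range m, (f (2*k) + f (2*k+1)) := by
  induction m with
  | zero => simp
  | succ m ih =>
    rw [Nat.mul_succ, Finset.sum_range_succ, Finset.sum_range_succ, Finset.sum_range_succ, ih]
    ring

section main
variable (n : ℕ) (ω : Fin n → ℝ) (φ : Matrix (Fin (2*n+2)) (Fin (2*n+2)) ℝ)

lemma mul_entry_row_zero (j : Fin (2*n+2)) (i : Fin (2*n+2)) (hi : i.val = 0)
    (h1 : (1:ℕ) < 2*n+2) :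
    (Lmat n ω * φ) i j = φ ⟨1, h1⟩ j := by
  rw [Matrix.mul_apply]
  rw [Finset.sum_eq_single (⟨1, h1⟩ : Fin (2*n+2))]
  · rw [Lmat_row_zero n ω i _ hi]; simp
  · intro l _ hl
    rw [Lmat_row_zero n ω i _ hi]
    have : ¬ l.val = 1 := fun hh => hl (Fin.ext hh)
    simp [this]
  · simp

lemma mul_entry_col_one (i : Fin (2*n+2)) (j : Fin (2*n+2)) (hj : j.val = 1)
    (h0 : (0:ℕ) < 2*n+2) :
    (φ * Lmat n ω) i j = φ i ⟨0, h0⟩ := by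
  rw [Matrix.mul_apply]
  rw [Finset.sum_eq_single (⟨0, h0⟩ : Fin (2*n+2))]
  · rw [Lmat_col_one n ω j _ hj]; simp
  · intro l _ hl
    rw [Lmat_col_one n ω j _ hj]
    have : ¬ l.val = 0 := fun hh => hl (Fin.ext hh)
    simp [this]
  · simp

lemma mul_entry_row (m : ℕ) (hm : m < n) (i j : Fin (2*n+2)) (hi : i.val = 2*m+2)
    (h3 : 2*m+3 < 2*n+2) :
    (Lmat n ω * φ) i j = ω ⟨m, hm⟩ * φ ⟨2*m+3, h3⟩ j := by
  rw [Matrix.mul_apply]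
  rw [Finset.sum_eq_single (⟨2*m+3, h3⟩ : Fin (2*n+2))]
  · rw [Lmat_row n ω m hm i _ hi]; simp
  · intro l _ hl
    rw [Lmat_row n ω m hm i _ hi]
    have : ¬ l.val = 2*m+3 := fun hh => hl (Fin.ext hh)
    simp [this]
  · simp

lemma mul_entry_col (m : ℕ) (hm : m < n) (i j : Fin (2*n+2)) (hj : j.val = 2*m+3)
    (h2 : 2*m+2 < 2*n+2) :
    (φ * Lmat n ω) i j = φ i ⟨2*m+2, h2⟩ * ω ⟨m, hm⟩ := by
  rw [Matrix.mul_apply]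
  rw [Finset.sum_eq_single (⟨2*m+2, h2⟩ : Fin (2*n+2))]
  · rw [Lmat_col n ω m hm j _ hj]; simp
  · intro l _ hl
    rw [Lmat_col n ω m hm j _ hj]
    have : ¬ l.val = 2*m+2 := fun hh => hl (Fin.ext hh)
    simp [this]
  · simp

end main

/-- Every linear involution anti-commuting with L has (n+1)-dimensional
fixed-point space. -/
theorem stmt11 (n : ℕ) (ω : Fin n → ℝ) (hω : ∀ i, ω i ≠ 0)
    (hdist : ∀ i j, i ≠ j → (ω i) ^ 2 ≠ (ω j) ^ 2)
    (φ : Matrix (Fin (2*n+2)) (Fin (2*n+2)) ℝ)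
    (hinv : φ * φ = 1)
    (hanti : Lmat n ω * φ = -(φ * Lmat n ω)) :
    Module.finrank ℝ (LinearMap.ker (Matrix.toLin' φ - LinearMap.id)) = n + 1 := by
  classical
  -- Step 1: the pairwise diagonal relations
  have key0 : ∀ (h0 : (0:ℕ) < 2*n+2) (h1 : (1:ℕ) < 2*n+2),
      φ ⟨0, h0⟩ ⟨0, h0⟩ + φ ⟨1, h1⟩ ⟨1, h1⟩ = 0 := by
    intro h0 h1
    have h := congrFun (congrFun hanti ⟨0, h0⟩) ⟨1, h1⟩
    rw [mul_entry_row_zero n ω φ _ _ rfl h1, Matrix.neg_apply,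
      mul_entry_col_one n ω φ _ _ rfl h0] at h
    linarith
  have keyS : ∀ (m : ℕ) (hm : m < n) (h2 : 2*m+2 < 2*n+2) (h3 : 2*m+3 < 2*n+2),
      φ ⟨2*m+2, h2⟩ ⟨2*m+2, h2⟩ + φ ⟨2*m+3, h3⟩ ⟨2*m+3, h3⟩ = 0 := by
    intro m hm h2 h3
    have h := congrFun (congrFun hanti ⟨2*m+2, h2⟩) ⟨2*m+3, h3⟩
    rw [mul_entry_row n ω φ m hm _ _ rfl h3, Matrix.neg_apply,
      mul_entry_col n ω φ m hm _ _ rfl h2] at h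
    have h4 : ω ⟨m, hm⟩ * (φ ⟨2*m+2, h2⟩ ⟨2*m+2, h2⟩ + φ ⟨2*m+3, h3⟩ ⟨2*m+3, h3⟩) = 0 := by
      linear_combination h
    rcases mul_eq_zero.mp h4 with h5 | h5
    · exact absurd h5 (hω _)
    · exact h5
  have key : ∀ (m : ℕ) (h2 : 2*m < 2*n+2) (h3 : 2*m+1 < 2*n+2),
      φ ⟨2*m, h2⟩ ⟨2*m, h2⟩ + φ ⟨2*m+1, h3⟩ ⟨2*m+1, h3⟩ = 0 := by
    intro m h2 h3
    match m with
    | 0 => exact key0 h2 h3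
    | (m+1) => exact keyS m (by omega) h2 h3
  -- Step 2: trace of φ is zero
  have htr : Matrix.trace φ = 0 := by
    rw [Matrix.trace]
    set f : ℕ → ℝ := fun i => if h : i < 2*n+2 then φ ⟨i, h⟩ ⟨i, h⟩ else 0 with hf
    have h1 : ∑ i : Fin (2*n+2), Matrix.diag φ i = ∑ i ∈ Finset.range (2*n+2), f i := by
      rw [← Fin.sum_univ_eq_sum_range]
      apply Finset.sum_congr rfl
      intro i _
      simp [hf, Matrix.diag, i.isLt]
    rw [h1, show 2*n+2 = 2*(n+1) by ring, sum_pairs]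
    apply Finset.sum_eq_zero
    intro k hk
    have hk' : k < n + 1 := Finset.mem_range.mp hk
    have hlt2 : 2*k < 2*n+2 := by omega
    have hlt3 : 2*k+1 < 2*n+2 := by omega
    simp only [hf, dif_pos hlt2, dif_pos hlt3]
    exact key k hlt2 hlt3
  -- Step 3: projection argument
  set F : (Fin (2*n+2) → ℝ) →ₗ[ℝ] (Fin (2*n+2) → ℝ) := Matrix.toLin' φ with hF
  have hff : ∀ x, F (F x) = x := by
    intro x
    have : Matrix.toLin' (φ * φ) = LinearMap.id (R := ℝ) (M := Fin (2*n+2) → ℝ) := by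
      rw [hinv, Matrix.toLin'_one]
    have h2 := LinearMap.ext_iff.mp this x
    simpa [Matrix.toLin'_mul, hF] using h2
  set g : (Fin (2*n+2) → ℝ) →ₗ[ℝ] (Fin (2*n+2) → ℝ) := (2:ℝ)⁻¹ • (LinearMap.id + F) with hg
  have hproj : LinearMap.IsProj (LinearMap.ker (F - LinearMap.id)) g := by
    constructor
    · intro x
      rw [LinearMap.mem_ker]
      simp only [hg, LinearMap.sub_apply, LinearMap.smul_apply, LinearMap.add_apply,
        LinearMap.id_apply, map_smul, map_add, hff x]
      have hz : F x - x + (x - F x) = 0 := by abel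
      rw [hz, smul_zero]
    · intro x hx
      rw [LinearMap.mem_ker, LinearMap.sub_apply, LinearMap.id_apply, sub_eq_zero] at hx
      simp only [hg, LinearMap.smul_apply, LinearMap.add_apply, LinearMap.id_apply, hx]
      rw [← two_smul ℝ, smul_smul]
      norm_num
  have htrace := hproj.trace
  have htrg : LinearMap.trace ℝ _ g = (n+1 : ℝ) := by
    have htrF : LinearMap.trace ℝ _ F = Matrix.trace φ := by
      rw [hF, LinearMap.trace_eq_matrix_trace ℝ (Pi.basisFun ℝ (Fin (2*n+2))),
        LinearMap.toMatrix_eq_toMatrix', LinearMap.toMatrix'_toLin']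
    rw [hg, map_smul, map_add, htrF, htr, LinearMap.trace_id]
    have : Module.finrank ℝ (Fin (2*n+2) → ℝ) = 2*n+2 := by
      simp [Module.finrank_pi]
    rw [this, smul_eq_mul]
    push_cast
    ring
  rw [htrace] at htrg
  exact_mod_cast htrg
end
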